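/- arXiv:2002.04899 — 3 statements merged into one kernel-verified Lean document; each statement's English description precedes it below -/
import Mathlib

section
/- Let α ≤ 1 and 0 ≤ s < α - 1/2, and let (gₙ)ₙ∈ℤ be i.i.d. standard complex Gaussians. Then for any constants C > 0 and B > 0, the random variable 𝟙{(Σₙ |gₙ|²/⟨n⟩^{2α})^{1/2} < B} · exp(C ‖Σₙ gₙ⟨n⟩^{-α} e^{inx}‖⁴_{H^s(𝕋)}) is integrable. -/
/-
Write `w n = 1 + n²`, `S = Σ w^s |gₙ|² / w^α = ‖X‖²_{H^s}` and `L = Σ |gₙ|² / w^α`. On `{L < b}`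
the modes with `w n ≤ R` contribute at most `b R^s` to `S`, so `S ≥ 2 b R^s` forces the modes with
`w n > R` to carry more than `b R^s`. Their weights `w^(s-α)` are at most `R^(s-α)` and summable
(since `s < α - 1/2`), so a Chernoff bound with parameter `R^(α-s) / 4`, fed by
`E exp(c |g|²) = (1 - 2c)⁻¹ ≤ exp(4c)` for `0 ≤ c ≤ 1/4`, gives
`P(S ≥ 2 b R^s, L < b) ≤ exp(Λ R^(α-s) - b R^α / 4)` with `Λ = Σ w^(s-α)`. Summing `exp(C S²)`
over the layers `2 b k^s ≤ S < 2 b (k+1)^s`, the gain `exp(-b k^α / 4)` beats the loss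
`exp(C' k^(2s))` because `2s < α`, which follows from `s < α - 1/2` and `α ≤ 1`.
For `s = 0` the integrand is bounded by `exp(C b²)`.
-/

open MeasureTheory ProbabilityTheory

/-- The law of a standard complex Gaussian random variable. -/
noncomputable def stdComplexGaussian : Measure ℂ :=
  ((gaussianReal 0 1).prod (gaussianReal 0 1)).map
    (fun p : ℝ × ℝ => Complex.equivRealProd.symm p)

open Real Filter Set

section Gaussian

lemma gaussianPDFReal_zero_one_mul_exp_mul_sq (c x : ℝ) :
    gaussianPDFReal 0 1 x * exp (c * x ^ 2) = (√(2 * π))⁻¹ * exp (-(1 / 2 - c) * x ^ 2) := by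
  rw [gaussianPDFReal, mul_assoc, ← exp_add]
  push_cast
  ring_nf

lemma integrable_exp_mul_sq_gaussianReal {c : ℝ} (hc : c < 1 / 2) :
    Integrable (fun x => exp (c * x ^ 2)) (gaussianReal 0 1) := by
  rw [gaussianReal_of_var_ne_zero _ one_ne_zero, integrable_withDensity_iff
    (measurable_gaussianPDF _ _) (.of_forall fun _ => ENNReal.ofReal_lt_top)]
  simp only [gaussianPDF, ENNReal.toReal_ofReal (gaussianPDFReal_nonneg _ _ _),
    mul_comm _ (gaussianPDFReal _ _ _), gaussianPDFReal_zero_one_mul_exp_mul_sq]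
  exact (integrable_exp_neg_mul_sq (by linarith)).const_mul _

lemma integral_exp_mul_sq_gaussianReal {c : ℝ} (hc : c < 1 / 2) :
    ∫ x, exp (c * x ^ 2) ∂gaussianReal 0 1 = (√(1 - 2 * c))⁻¹ := by
  rw [integral_gaussianReal_eq_integral_smul one_ne_zero]
  simp only [smul_eq_mul, gaussianPDFReal_zero_one_mul_exp_mul_sq]
  rw [integral_const_mul, integral_gaussian, show π / (1 / 2 - c) = 2 * π / (1 - 2 * c) by
    field_simp, sqrt_div' _ (by linarith), div_eq_mul_inv, ← mul_assoc,
    inv_mul_cancel₀ (by positivity), one_mul]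

lemma stdComplexGaussian_eq_map :
    stdComplexGaussian =
      ((gaussianReal 0 1).prod (gaussianReal 0 1)).map Complex.measurableEquivRealProd.symm :=
  rfl

lemma exp_mul_norm_sq_measurableEquivRealProd_symm (c : ℝ) (p : ℝ × ℝ) :
    exp (c * ‖Complex.measurableEquivRealProd.symm p‖ ^ 2) =
      exp (c * p.1 ^ 2) * exp (c * p.2 ^ 2) := by
  rw [Complex.measurableEquivRealProd_symm_apply, Complex.sq_norm, Complex.normSq_mk, ← exp_add]
  ring_nf

lemma integrable_exp_mul_norm_sq_stdComplexGaussian {c : ℝ} (hc : c < 1 / 2) :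
    Integrable (fun z : ℂ => exp (c * ‖z‖ ^ 2)) stdComplexGaussian := by
  rw [stdComplexGaussian_eq_map, integrable_map_equiv]
  simpa only [Function.comp_def, exp_mul_norm_sq_measurableEquivRealProd_symm] using
    (integrable_exp_mul_sq_gaussianReal hc).mul_prod (integrable_exp_mul_sq_gaussianReal hc)

lemma mgf_norm_sq_stdComplexGaussian {c : ℝ} (hc : c < 1 / 2) :
    mgf (fun z : ℂ => ‖z‖ ^ 2) stdComplexGaussian c = (1 - 2 * c)⁻¹ := by
  rw [mgf, stdComplexGaussian_eq_map, integral_map_equiv]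
  simp only [exp_mul_norm_sq_measurableEquivRealProd_symm]
  rw [integral_prod_mul (fun x => exp (c * x ^ 2)) (fun x => exp (c * x ^ 2)),
    integral_exp_mul_sq_gaussianReal hc, ← mul_inv, mul_self_sqrt (by linarith)]

lemma inv_one_sub_two_mul_le_exp {c : ℝ} (hc0 : 0 ≤ c) (hc : c ≤ 1 / 4) :
    (1 - 2 * c)⁻¹ ≤ exp (4 * c) := by
  rw [inv_le_iff_one_le_mul₀ (by linarith)]
  nlinarith [add_one_le_exp (4 * c)]

end Gaussian

section Series

lemma mul_rpow_lt_tsum_indicator_mul {ι : Type*} {w x : ι → ℝ} (hw : ∀ n, 1 ≤ w n) (hx : 0 ≤ x)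
    {s α b R : ℝ} (hs : 0 ≤ s) (hR : 0 < R) (hL : ∑' n, x n / w n ^ α < b)
    (hS : 2 * b * R ^ s ≤ ∑' n, w n ^ s * x n / w n ^ α) :
    b * R ^ s < ∑' n, {n | R < w n}.indicator (fun n => w n ^ (s - α)) n * x n := by
  set f : ι → ℝ := fun n => w n ^ (s - α) * x n
  have hw0 n : 0 < w n := one_pos.trans_le (hw n)
  have hxw n : 0 ≤ x n / w n ^ α := div_nonneg (hx n) (rpow_pos_of_pos (hw0 n) α).le
  have hf n : w n ^ s * x n / w n ^ α = f n := by
    simp only [f]; rw [rpow_sub (hw0 n)]; ring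
  simp only [hf] at hS
  have hL0 : 0 ≤ ∑' n, x n / w n ^ α := tsum_nonneg hxw
  have hRs : 0 < R ^ s := rpow_pos_of_pos hR s
  -- a non-summable `∑'` is `0`, which `hS` and `hL` rule out
  have hfsum : Summable f := by
    by_contra hns
    rw [tsum_eq_zero_of_not_summable hns] at hS
    nlinarith
  have hLsum : Summable fun n => x n / w n ^ α := by
    refine hfsum.of_nonneg_of_le hxw fun n => ?_
    rw [← hf, mul_div_assoc]
    exact le_mul_of_one_le_left (hxw n) (one_le_rpow (hw n) hs)
  set H := {n | R < w n}
  have hlow : ∑' n, Hᶜ.indicator f n ≤ R ^ s * ∑' n, x n / w n ^ α := by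
    rw [← tsum_mul_left]
    refine (hfsum.indicator _).tsum_le_tsum (fun n => ?_) (hLsum.mul_left _)
    by_cases hn : n ∈ H
    · rw [indicator_of_notMem (notMem_compl_iff.mpr hn)]
      exact mul_nonneg hRs.le (hxw n)
    · rw [indicator_of_mem hn, ← hf, mul_div_assoc]
      exact mul_le_mul_of_nonneg_right (rpow_le_rpow (hw0 n).le (not_lt.mp hn) hs) (hxw n)
  have hsplit := (hfsum.indicator H).tsum_add (hfsum.indicator Hᶜ)
  simp only [indicator_self_add_compl_apply] at hsplit
  simp only [← indicator_mul_left]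
  nlinarith

lemma isLittleO_rpow_rpow_atTop {p q : ℝ} (hpq : p < q) :
    (fun x : ℝ => x ^ p) =o[atTop] fun x => x ^ q := by
  refine (Asymptotics.isLittleO_iff_tendsto' ?_).mpr ?_
  · filter_upwards [eventually_gt_atTop 0] with x hx h
    exact absurd h (rpow_pos_of_pos hx q).ne'
  · refine (tendsto_rpow_neg_atTop (sub_pos.mpr hpq)).congr' ?_
    filter_upwards [eventually_gt_atTop 0] with x hx
    rw [← rpow_sub hx]; ring_nf

lemma summable_exp_sub_mul_rpow {f : ℝ → ℝ} {r c : ℝ} (hr : 0 < r) (hc : 0 < c)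
    (hf : f =o[atTop] fun x => x ^ r) : Summable fun k : ℕ => exp (f k - c * k ^ r) := by
  have hlog : (fun x => f x + 2 * log x) =o[atTop] fun x => x ^ r :=
    hf.add ((isLittleO_log_rpow_atTop hr).const_mul_left 2)
  have hev : ∀ᶠ x in atTop, exp (f x - c * x ^ r) ≤ x ^ (-2 : ℝ) := by
    filter_upwards [hlog.bound hc, eventually_gt_atTop 0] with x hx hx0
    rw [Real.norm_eq_abs, norm_of_nonneg (rpow_nonneg hx0.le r)] at hx
    rw [rpow_def_of_pos hx0 (-2), exp_le_exp]
    linarith [le_abs_self (f x + 2 * log x)]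
  refine Summable.of_norm_bounded_eventually (g := fun k : ℕ => (k : ℝ) ^ (-2 : ℝ))
    (Real.summable_nat_rpow.mpr (by norm_num)) ?_
  rw [Nat.cofinite_eq_atTop]
  filter_upwards [tendsto_natCast_atTop_atTop.eventually hev] with k hk
  rwa [norm_of_nonneg (exp_nonneg _)]

lemma summable_one_add_sq_rpow {β : ℝ} (hβ : β < -(1 / 2)) :
    Summable fun n : ℤ => (1 + (n : ℝ) ^ 2) ^ β := by
  refine Summable.of_norm_bounded_eventually (g := fun n : ℤ => |(n : ℝ)| ^ (-(-(2 * β))))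
    (Real.summable_abs_int_rpow (by linarith)) ?_
  filter_upwards [eventually_cofinite_ne 0] with n hn
  rw [norm_of_nonneg (by positivity), neg_neg, rpow_mul (abs_nonneg _), rpow_two, sq_abs]
  exact rpow_le_rpow_of_nonpos (by positivity) (by linarith) (by linarith)

lemma summable_exp_mul_sq_rpow_add_sub_rpow {s α b C Λ : ℝ} (hs : 0 < s) (h2s : 2 * s < α)
    (hb : 0 < b) (hC : 0 ≤ C) :
    Summable fun k : ℕ => exp (C * (2 * b * ((k : ℝ) + 1 + 1) ^ s) ^ 2 +
      (Λ * ((k : ℝ) + 1) ^ (α - s) - b / 4 * ((k : ℝ) + 1) ^ α)) := by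
  set f : ℝ → ℝ := fun x => C * (2 * b * (2 * x) ^ s) ^ 2 + Λ * x ^ (α - s)
  have hf : f =o[atTop] fun x => x ^ α := by
    refine .add ?_ ((isLittleO_rpow_rpow_atTop (by linarith : α - s < α)).const_mul_left Λ)
    refine ((isLittleO_rpow_rpow_atTop (by linarith : s * 2 < α)).const_mul_left
      (C * (2 * b * 2 ^ s) ^ 2)).congr' ?_ .rfl
    filter_upwards [eventually_ge_atTop 0] with x hx
    rw [mul_rpow zero_le_two hx, rpow_mul hx, rpow_two]
    ring
  have hsum := (summable_nat_add_iff 1).mpr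
    (summable_exp_sub_mul_rpow (by linarith) (by positivity : 0 < b / 4) hf)
  refine hsum.of_nonneg_of_le (fun _ => exp_nonneg _) fun k => ?_
  simp only [f, Nat.cast_add, Nat.cast_one, exp_le_exp]
  have hk : C * (2 * b * ((k : ℝ) + 1 + 1) ^ s) ^ 2 ≤
      C * (2 * b * (2 * ((k : ℝ) + 1)) ^ s) ^ 2 := by
    gcongr; linarith [k.cast_nonneg (α := ℝ)]
  linarith

end Series

section Probability

variable {ι Ω : Type*} [MeasurableSpace Ω] {P : Measure Ω} {g : ι → Ω → ℂ}

lemma integrable_exp_mul_norm_sq_of_map_eq {X : Ω → ℂ} (hX : Measurable X)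
    (hlaw : P.map X = stdComplexGaussian) {c : ℝ} (hc : c < 1 / 2) :
    Integrable (fun ω => exp (c * ‖X ω‖ ^ 2)) P := by
  have h := integrable_exp_mul_norm_sq_stdComplexGaussian hc
  rw [← hlaw] at h
  exact (integrable_map_measure h.aestronglyMeasurable hX.aemeasurable).mp h

lemma mgf_norm_sq_of_map_eq {X : Ω → ℂ} (hX : Measurable X)
    (hlaw : P.map X = stdComplexGaussian) {c : ℝ} (hc : c < 1 / 2) :
    mgf (fun ω => ‖X ω‖ ^ 2) P c = (1 - 2 * c)⁻¹ := by
  rw [← mgf_norm_sq_stdComplexGaussian hc, ← hlaw, mgf_map hX.aemeasurable (by fun_prop)]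
  rfl

lemma measure_le_sum_mul_norm_sq_le [IsProbabilityMeasure P]
    (hmeas : ∀ n, Measurable (g n)) (hlaw : ∀ n, P.map (g n) = stdComplexGaussian)
    (hindep : iIndepFun g P) {w : ι → ℝ} (hw : 0 ≤ w) {t : ℝ} (ht : 0 ≤ t)
    (htw : ∀ n, t * w n ≤ 1 / 4) (D : Finset ι) (a : ℝ) :
    P {ω | a ≤ ∑ n ∈ D, w n * ‖g n ω‖ ^ 2} ≤
      ENNReal.ofReal (exp (-t * a + 4 * t * ∑ n ∈ D, w n)) := by
  set Y : ι → Ω → ℝ := fun n ω => w n * ‖g n ω‖ ^ 2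
  have hY : ∀ n, Measurable (Y n) := fun n => by fun_prop
  have hYindep : iIndepFun Y P :=
    hindep.comp (fun n z => w n * ‖z‖ ^ 2) (fun n => by fun_prop)
  have hint : ∀ n ∈ D, Integrable (fun ω => exp (t * Y n ω)) P := fun n _ => by
    simpa only [Y, mul_assoc] using integrable_exp_mul_norm_sq_of_map_eq (hmeas n) (hlaw n)
      (c := t * w n) (by linarith [htw n])
  have hmgf : mgf (∑ n ∈ D, Y n) P t ≤ exp (4 * t * ∑ n ∈ D, w n) := by
    rw [hYindep.mgf_sum hY, Finset.mul_sum, exp_sum]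
    refine Finset.prod_le_prod (fun _ _ => mgf_nonneg) fun n _ => ?_
    rw [mgf_const_mul, mul_comm (w n),
      mgf_norm_sq_of_map_eq (hmeas n) (hlaw n) (by linarith [htw n])]
    simpa only [mul_assoc] using inv_one_sub_two_mul_le_exp (mul_nonneg ht (hw n)) (htw n)
  have hchernoff := measure_ge_le_exp_mul_mgf a ht (hYindep.integrable_exp_mul_sum hY hint)
  simp only [Finset.sum_apply] at hchernoff
  rw [ENNReal.le_ofReal_iff_toReal_le (measure_ne_top _ _) (exp_nonneg _), exp_add]
  exact hchernoff.trans (by gcongr)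

lemma measure_lt_tsum_mul_norm_sq_le [IsProbabilityMeasure P] [Countable ι]
    (hmeas : ∀ n, Measurable (g n)) (hlaw : ∀ n, P.map (g n) = stdComplexGaussian)
    (hindep : iIndepFun g P) {w : ι → ℝ} (hw : 0 ≤ w) (hsum : Summable w) {t : ℝ} (ht : 0 ≤ t)
    (htw : ∀ n, t * w n ≤ 1 / 4) (a : ℝ) :
    P {ω | a < ∑' n, w n * ‖g n ω‖ ^ 2} ≤
      ENNReal.ofReal (exp (-t * a + 4 * t * ∑' n, w n)) := by
  have hcover : {ω | a < ∑' n, w n * ‖g n ω‖ ^ 2} ⊆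
      ⋃ D : Finset ι, {ω | a ≤ ∑ n ∈ D, w n * ‖g n ω‖ ^ 2} := by
    intro ω hω
    by_contra! h
    simp only [mem_iUnion, mem_ofPred_eq, not_exists, not_le] at h
    exact hω.not_ge
      (tsum_le_of_sum_le (fun n => mul_nonneg (hw n) (sq_nonneg _)) fun D => (h D).le)
  have hmono : Monotone fun D : Finset ι => {ω | a ≤ ∑ n ∈ D, w n * ‖g n ω‖ ^ 2} :=
    fun D D' hD ω hω => hω.trans
      (Finset.sum_le_sum_of_subset_of_nonneg hD fun n _ _ => mul_nonneg (hw n) (sq_nonneg _))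
  refine (measure_mono hcover).trans ?_
  rw [hmono.directed_le.measure_iUnion]
  refine iSup_le fun D => (measure_le_sum_mul_norm_sq_le hmeas hlaw hindep hw ht htw D a).trans ?_
  gcongr
  exact hsum.sum_le_tsum D fun n _ => hw n

lemma measure_le_weighted_tsum_inter_tsum_lt_le [Countable ι] [IsProbabilityMeasure P]
    (hmeas : ∀ n, Measurable (g n)) (hlaw : ∀ n, P.map (g n) = stdComplexGaussian)
    (hindep : iIndepFun g P) {w : ι → ℝ} (hw : ∀ n, 1 ≤ w n) {s α b R : ℝ} (hs : 0 ≤ s)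
    (hsα : s ≤ α) (hsum : Summable fun n => w n ^ (s - α)) (hR : 0 < R) :
    P ({ω | 2 * b * R ^ s ≤ ∑' n, w n ^ s * ‖g n ω‖ ^ 2 / w n ^ α} ∩
        {ω | ∑' n, ‖g n ω‖ ^ 2 / w n ^ α < b}) ≤
      ENNReal.ofReal (exp ((∑' n, w n ^ (s - α)) * R ^ (α - s) - b / 4 * R ^ α)) := by
  set H : Set ι := {n | R < w n}
  have hwpow n : 0 ≤ w n ^ (s - α) := rpow_nonneg (one_pos.trans_le (hw n)).le _
  have hv0 : 0 ≤ H.indicator fun n => w n ^ (s - α) := indicator_nonneg fun n _ => hwpow n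
  have hRR : R ^ (α - s) * R ^ (s - α) = 1 := by rw [← rpow_add hR]; simp
  have htv n : R ^ (α - s) / 4 * H.indicator (fun n => w n ^ (s - α)) n ≤ 1 / 4 := by
    by_cases hn : n ∈ H
    · rw [indicator_of_mem hn]
      calc R ^ (α - s) / 4 * w n ^ (s - α) ≤ R ^ (α - s) / 4 * R ^ (s - α) := by
            gcongr ?_ * ?_
            exact rpow_le_rpow_of_nonpos hR (le_of_lt hn) (by linarith)
        _ = 1 / 4 := by rw [div_mul_eq_mul_div, hRR]
    · rw [indicator_of_notMem hn, mul_zero]; norm_num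
  have hvΛ : ∑' n, H.indicator (fun n => w n ^ (s - α)) n ≤ ∑' n, w n ^ (s - α) :=
    (hsum.indicator _).tsum_le_tsum (indicator_le_self' fun n _ => hwpow n) hsum
  have hRα : R ^ (α - s) * R ^ s = R ^ α := by rw [← rpow_add hR]; ring_nf
  refine (measure_mono ?_).trans ((measure_lt_tsum_mul_norm_sq_le hmeas hlaw hindep hv0
    (hsum.indicator _) (by positivity) htv (b * R ^ s)).trans ?_)
  · rintro ω ⟨hS, hL⟩
    exact mul_rpow_lt_tsum_indicator_mul hw (fun n => sq_nonneg ‖g n ω‖) hs hR hL hS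
  · gcongr ENNReal.ofReal (exp ?_)
    have hexp : -(R ^ (α - s) / 4) * (b * R ^ s) = -(b / 4) * R ^ α := by rw [← hRα]; ring
    nlinarith [mul_le_mul_of_nonneg_left hvΛ (rpow_pos_of_pos hR (α - s)).le]

lemma lintegral_ofReal_comp_le_tsum (μ : Measure Ω) {Y : Ω → ℝ} (hY : Measurable Y)
    (hY0 : 0 ≤ Y) {φ : ℝ → ℝ} (hφ : MonotoneOn φ (Ici 0)) {r : ℕ → ℝ}
    (hr : Tendsto r atTop atTop) :
    ∫⁻ ω, ENNReal.ofReal (φ (Y ω)) ∂μ ≤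
      ENNReal.ofReal (φ (r 0)) * μ univ +
        ∑' k, ENNReal.ofReal (φ (r (k + 1))) * μ {ω | r k ≤ Y ω} := by
  have hlayer k : MeasurableSet {ω | r k ≤ Y ω} := measurableSet_le measurable_const hY
  have hpoint ω : ENNReal.ofReal (φ (Y ω)) ≤ ENNReal.ofReal (φ (r 0)) +
      ∑' k, {ω | r k ≤ Y ω}.indicator (fun _ => ENNReal.ofReal (φ (r (k + 1)))) ω := by
    classical
    have hex : ∃ m, Y ω < r m := (hr.eventually_gt_atTop (Y ω)).exists
    have hle {m} (hm : Y ω < r m) : ENNReal.ofReal (φ (Y ω)) ≤ ENNReal.ofReal (φ (r m)) :=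
      ENNReal.ofReal_le_ofReal (hφ (hY0 ω) ((hY0 ω).trans hm.le) hm.le)
    rcases h : Nat.find hex with _ | k
    · exact (hle (h ▸ Nat.find_spec hex)).trans le_self_add
    · have hk : ω ∈ {ω | r k ≤ Y ω} := not_lt.mp (Nat.find_min hex (by omega))
      refine (hle (h ▸ Nat.find_spec hex)).trans (le_add_left ?_)
      refine le_of_eq_of_le ?_ (ENNReal.le_tsum k)
      rw [indicator_of_mem hk]
  refine (lintegral_mono hpoint).trans_eq ?_
  rw [lintegral_add_left measurable_const, lintegral_const,
    lintegral_tsum fun k => (measurable_const.indicator (hlayer k)).aemeasurable]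
  simp only [lintegral_indicator_const (hlayer _)]

theorem lintegral_exp_mul_sq_tsum_lt_top [Countable ι] [IsProbabilityMeasure P]
    (hmeas : ∀ n, Measurable (g n)) (hlaw : ∀ n, P.map (g n) = stdComplexGaussian)
    (hindep : iIndepFun g P) {w : ι → ℝ} (hw : ∀ n, 1 ≤ w n) {s α b C : ℝ}
    (hsum : Summable fun n => w n ^ (s - α)) (hs : 0 < s) (h2s : 2 * s < α) (hC : 0 ≤ C)
    (hb : 0 < b) :
    ∫⁻ ω in {ω | ∑' n, ‖g n ω‖ ^ 2 / w n ^ α < b},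
      ENNReal.ofReal (exp (C * (∑' n, w n ^ s * ‖g n ω‖ ^ 2 / w n ^ α) ^ 2)) ∂P < ⊤ := by
  set S : Ω → ℝ := fun ω => ∑' n, w n ^ s * ‖g n ω‖ ^ 2 / w n ^ α
  have hw0 n : 0 < w n := one_pos.trans_le (hw n)
  have hS : Measurable S := Measurable.tsum fun n => by fun_prop
  have hS0 : 0 ≤ S := fun ω => tsum_nonneg fun n =>
    div_nonneg (mul_nonneg (rpow_nonneg (hw0 n).le s) (sq_nonneg _)) (rpow_nonneg (hw0 n).le α)
  have hφ : MonotoneOn (fun x => exp (C * x ^ 2)) (Ici 0) := fun x hx y _ hxy =>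
    exp_le_exp.mpr (mul_le_mul_of_nonneg_left (pow_le_pow_left₀ hx hxy 2) hC)
  have hr : Tendsto (fun k : ℕ => 2 * b * ((k : ℝ) + 1) ^ s) atTop atTop :=
    ((tendsto_rpow_atTop hs).comp (tendsto_atTop_add_const_right _ 1
      tendsto_natCast_atTop_atTop)).const_mul_atTop (by positivity)
  refine (lintegral_ofReal_comp_le_tsum _ hS hS0 hφ hr).trans_lt (ENNReal.add_lt_top.mpr
    ⟨ENNReal.mul_lt_top ENNReal.ofReal_lt_top (measure_lt_top _ _), ?_⟩)
  have hseries := summable_exp_mul_sq_rpow_add_sub_rpow (Λ := ∑' n, w n ^ (s - α)) hs h2s hb hC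
  refine (ENNReal.tsum_le_tsum fun k => ?_).trans_lt ((ENNReal.ofReal_tsum_of_nonneg
    (fun _ => exp_nonneg _) hseries).symm.trans_lt ENNReal.ofReal_lt_top)
  rw [Measure.restrict_apply (measurableSet_le measurable_const hS)]
  refine (mul_le_mul_right (measure_le_weighted_tsum_inter_tsum_lt_le hmeas hlaw hindep hw
    hs.le (by linarith) hsum (by positivity : (0 : ℝ) < k + 1)) _).trans_eq ?_
  rw [← ENNReal.ofReal_mul (exp_nonneg _), ← exp_add]
  push_cast
  rfl

theorem integrable_indicator_exp_mul_sq_tsum [Countable ι] [IsProbabilityMeasure P]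
    (hmeas : ∀ n, Measurable (g n)) (hlaw : ∀ n, P.map (g n) = stdComplexGaussian)
    (hindep : iIndepFun g P) {w : ι → ℝ} (hw : ∀ n, 1 ≤ w n) {s α b C : ℝ}
    (hsum : Summable fun n => w n ^ (s - α)) (hs : 0 ≤ s) (h2s : 2 * s < α) (hC : 0 ≤ C)
    (hb : 0 < b) :
    Integrable (fun ω => indicator {ω | ∑' n, ‖g n ω‖ ^ 2 / w n ^ α < b}
      (fun ω => exp (C * (∑' n, w n ^ s * ‖g n ω‖ ^ 2 / w n ^ α) ^ 2)) ω) P := by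
  have hE : MeasurableSet {ω | ∑' n, ‖g n ω‖ ^ 2 / w n ^ α < b} :=
    measurableSet_lt (Measurable.tsum fun n => by fun_prop) measurable_const
  have hF : Measurable fun ω => exp (C * (∑' n, w n ^ s * ‖g n ω‖ ^ 2 / w n ^ α) ^ 2) :=
    (Measurable.tsum fun n => by fun_prop).pow_const 2 |>.const_mul C |>.exp
  rw [integrable_indicator_iff hE]
  rcases hs.eq_or_lt with rfl | hs
  · refine Integrable.of_bound hF.aestronglyMeasurable (exp (C * b ^ 2)) ?_
    rw [ae_restrict_iff' hE]
    refine .of_forall fun ω (hω : _ < b) => ?_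
    simp only [rpow_zero, one_mul, norm_of_nonneg (exp_nonneg _), exp_le_exp]
    have hL0 : 0 ≤ ∑' n, ‖g n ω‖ ^ 2 / w n ^ α := tsum_nonneg fun n =>
      div_nonneg (sq_nonneg _) (rpow_nonneg (one_pos.trans_le (hw n)).le α)
    exact mul_le_mul_of_nonneg_left (pow_le_pow_left₀ hL0 hω.le 2) hC
  · exact ⟨hF.aestronglyMeasurable,
      (hasFiniteIntegral_iff_ofReal (.of_forall fun _ => exp_nonneg _)).mpr
        (lintegral_exp_mul_sq_tsum_lt_top hmeas hlaw hindep hw hsum hs h2s hC hb)⟩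

end Probability

/-- For `α ≤ 1`, `0 ≤ s < α - 1/2` and i.i.d. standard complex Gaussians `gₙ`,
for any `C > 0` and `B > 0` the random variable
`𝟙{(Σₙ|gₙ|²⟨n⟩^{-2α})^{1/2} < B} · exp(C ‖Σₙ gₙ⟨n⟩^{-α}e^{inx}‖⁴_{H^s})`
is integrable; here `‖X‖²_{H^s} = Σₙ ⟨n⟩^{2s}|gₙ|²⟨n⟩^{-2α}` with `⟨n⟩² = 1+n²`. -/
theorem exp_integrability_Hs {Ω : Type*} [MeasurableSpace Ω]
    (P : Measure Ω) [IsProbabilityMeasure P]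
    (g : ℤ → Ω → ℂ) (hmeas : ∀ n, Measurable (g n))
    (hdist : ∀ n, Measure.map (g n) P = stdComplexGaussian)
    (hindep : iIndepFun g P)
    (α s : ℝ) (hα : α ≤ 1) (hs0 : 0 ≤ s) (hs : s < α - 1/2)
    (C B : ℝ) (hC : 0 < C) (hB : 0 < B) :
    Integrable
      (fun ω => Set.indicator
        {ω | (∑' n : ℤ, ‖g n ω‖^2 / (1 + (n : ℝ)^2) ^ α) < B^2}
        (fun ω => Real.exp (C *
          (∑' n : ℤ, (1 + (n : ℝ)^2) ^ s * ‖g n ω‖^2 / (1 + (n : ℝ)^2) ^ α)^2)) ω)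
      P :=
  integrable_indicator_exp_mul_sq_tsum hmeas hdist hindep
    (fun n => le_add_of_nonneg_right (sq_nonneg _)) (summable_one_add_sq_rpow (by linarith)) hs0
    (by linarith) hC.le (by positivity)
end

section
/- Let k, k1, k2, k3 be integers with k = k1 - k2 + k3, |k1 - k2| ≥ 1, |-k2 + k3| ≥ 1, and suppose |k3| is much larger than |k1| and |k2| in the sense |k3| ≥ 4(|k1| + |k2| + 1). If β = 0 then |3(k1-k2)(-k2+k3)(k3+k1)| ≥ c|k|²|k1-k2| for an absolute constant c > 0. -/
/-- Modulation lower bound in the regime where `k₃` dominates: if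
`k = k1 - k2 + k3`, `|k1-k2| ≥ 1`, `|-k2+k3| ≥ 1` and `|k3| ≥ 4(|k1|+|k2|+1)`,
then (with `β = 0`) `|3(k1-k2)(-k2+k3)(k3+k1)| ≥ c |k|² |k1-k2|`. -/
theorem modulation_lower_bound :
    ∃ c : ℝ, 0 < c ∧ ∀ k k1 k2 k3 : ℤ,
      k = k1 - k2 + k3 → 1 ≤ |k1 - k2| → 1 ≤ |-k2 + k3| →
      4 * (|k1| + |k2| + 1) ≤ |k3| →
      c * |(k : ℝ)|^2 * |(k1 : ℝ) - k2|
        ≤ |3 * ((k1 : ℝ) - k2) * (-(k2 : ℝ) + k3) * ((k3 : ℝ) + k1)| := by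
  refine ⟨27/64, by norm_num, ?_⟩
  intro k k1 k2 k3 hk h12 h23 hdom
  have hdomR : 4 * (|(k1:ℝ)| + |(k2:ℝ)| + 1) ≤ |(k3:ℝ)| := by
    exact_mod_cast hdom
  have h12R : (1:ℝ) ≤ |(k1:ℝ) - k2| := by exact_mod_cast h12
  have hkR : (k:ℝ) = (k1:ℝ) - k2 + k3 := by rw [hk]; push_cast; ring
  have h1 : |(k3:ℝ) + k1| ≥ |(k3:ℝ)| - |(k1:ℝ)| := by
    have := abs_add_le (k3:ℝ) (k1:ℝ)
    have h2 := abs_sub_abs_le_abs_sub (k3:ℝ) (-(k1:ℝ))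
    simpa [sub_neg_eq_add] using h2
  have h2 : |(-(k2:ℝ) + k3)| ≥ |(k3:ℝ)| - |(k2:ℝ)| := by
    have h2 := abs_sub_abs_le_abs_sub (k3:ℝ) (k2:ℝ)
    calc |(k3:ℝ)| - |(k2:ℝ)| ≤ |(k3:ℝ) - k2| := h2
    _ = |(-(k2:ℝ) + k3)| := by ring_nf
  have hkle : |(k:ℝ)| ≤ |(k1:ℝ)| + |(k2:ℝ)| + |(k3:ℝ)| := by
    rw [hkR]
    calc |(k1:ℝ) - k2 + k3| ≤ |(k1:ℝ) - k2| + |(k3:ℝ)| := abs_add_le _ _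
    _ ≤ (|(k1:ℝ)| + |(k2:ℝ)|) + |(k3:ℝ)| := by
        have := abs_sub (k1:ℝ) (k2:ℝ); linarith
  have habs : |3 * ((k1 : ℝ) - k2) * (-(k2 : ℝ) + k3) * ((k3 : ℝ) + k1)|
      = 3 * |(k1:ℝ) - k2| * |(-(k2:ℝ) + k3)| * |(k3:ℝ) + k1| := by
    rw [abs_mul, abs_mul, abs_mul]
    norm_num
  rw [habs]
  have ha1 : (0:ℝ) ≤ |(k1:ℝ)| := abs_nonneg _
  have ha2 : (0:ℝ) ≤ |(k2:ℝ)| := abs_nonneg _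
  have ha3 : (0:ℝ) ≤ |(k3:ℝ)| := abs_nonneg _
  have hak : (0:ℝ) ≤ |(k:ℝ)| := abs_nonneg _
  -- key bounds
  have hb1 : (3/8 : ℝ) * |(k:ℝ)| ≤ |(k3:ℝ) + k1| := by nlinarith
  have hb2 : (3/8 : ℝ) * |(k:ℝ)| ≤ |(-(k2:ℝ) + k3)| := by nlinarith
  have hb1' : (0:ℝ) ≤ |(k3:ℝ) + k1| := abs_nonneg _
  have hBC : (9/64 : ℝ) * |(k:ℝ)|^2 ≤ |(-(k2:ℝ) + k3)| * |(k3:ℝ) + k1| := by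
    nlinarith [mul_le_mul hb2 hb1 (by positivity) (abs_nonneg (-(k2:ℝ) + k3))]
  nlinarith [mul_le_mul_of_nonneg_left hBC (abs_nonneg ((k1:ℝ) - k2)), h12R, sq_nonneg |(k:ℝ)|]
end

section
/- Let X be a Polish space, μ a Borel probability measure on X, and (T_N), T Borel maps X → X such that T_N(x) → T(x) for μ-a.e. x. Suppose the push-forward (T_N)_*μ has density f_N with respect to μ, the f_N are uniformly bounded in L^p(μ) for some p > 1, and f_N → f μ-a.e. Then T_*μ has density f with respect to μ; in particular, if f > 0 μ-a.e. then T_*μ and μ are mutually absolutely continuous. -/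
/-! For bounded continuous `φ`, pass to the limit in `∫ φ ∘ T_N dμ = ∫ φ f_N dμ`. The left side
converges by dominated convergence. On the right, Hölder's inequality bounds the `L¹` norm of
`f_N` on a set `s` by `M μ(s)^(1 - 1/p)`, so the `f_N` are uniformly integrable and Vitali's
theorem gives `f_N → f` in `L¹`. Bounded continuous functions separate finite Borel measures on
a metrizable space, hence `T_* μ = f · μ`. -/

open MeasureTheory Filter Topology
open scoped ENNReal NNReal BoundedContinuousFunction

lemma ENNReal.one_div_toReal_sub_one_div_toReal_pos {p q : ℝ≥0∞} (hp : p ≠ 0) (hpq : p < q) :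
    0 < 1 / p.toReal - 1 / q.toReal := by
  have hp_pos : 0 < p.toReal := ENNReal.toReal_pos hp hpq.ne_top
  obtain rfl | hq := eq_or_ne q ∞
  · simpa using hp_pos
  exact sub_pos.2 (one_div_lt_one_div_of_lt hp_pos ((ENNReal.toReal_lt_toReal hpq.ne_top hq).2 hpq))

namespace MeasureTheory

variable {α β : Type*} [MeasurableSpace α] {μ : Measure α} [NormedAddCommGroup β]

theorem uniformIntegrable_of_eLpNorm_le [IsFiniteMeasure μ] {ι : Type*} {f : ι → α → β}
    {p q : ℝ≥0∞} (hp : p ≠ 0) (hpq : p < q) (hf : ∀ i, AEStronglyMeasurable (f i) μ)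
    {M : ℝ≥0∞} (hM : M ≠ ∞) (hbound : ∀ i, eLpNorm (f i) q μ ≤ M) :
    UniformIntegrable f p μ := by
  set r := 1 / p.toReal - 1 / q.toReal
  have hr : 0 < r := ENNReal.one_div_toReal_sub_one_div_toReal_pos hp hpq
  have holder {ν : Measure α} (hν : ν ≤ μ) (i : ι) : eLpNorm (f i) p ν ≤ M * ν Set.univ ^ r :=
    (eLpNorm_le_eLpNorm_mul_rpow_measure_univ hpq.le ((hf i).mono_measure hν)).trans
      (mul_le_mul_left ((eLpNorm_mono_measure (f i) hν).trans (hbound i)) _)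
  refine ⟨hf, fun ε hε => ?_, ⟨(M * μ Set.univ ^ r).toNNReal, fun i => ?_⟩⟩
  · have hsmall : Tendsto (fun δ : ℝ => M * ENNReal.ofReal δ ^ r) (𝓝[>] 0) (𝓝 0) := by
      have := ENNReal.Tendsto.const_mul
        (((ENNReal.continuous_rpow_const (y := r)).comp ENNReal.continuous_ofReal).tendsto 0)
        (Or.inr hM)
      simpa [ENNReal.zero_rpow_of_pos hr] using this.mono_left nhdsWithin_le_nhds
    obtain ⟨δ, hδM, hδ⟩ := ((hsmall.eventually (gt_mem_nhds (ENNReal.ofReal_pos.2 hε))).and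
      self_mem_nhdsWithin).exists
    refine ⟨δ, hδ, fun i s hs hμs => ?_⟩
    rw [eLpNorm_indicator_eq_eLpNorm_restrict hs]
    calc eLpNorm (f i) p (μ.restrict s) ≤ M * μ s ^ r := by
          simpa using holder Measure.restrict_le_self i
      _ ≤ M * ENNReal.ofReal δ ^ r := by gcongr
      _ ≤ ENNReal.ofReal ε := hδM.le
  · rw [ENNReal.coe_toNNReal (by finiteness)]
    exact holder le_rfl i

theorem memLp_and_tendsto_eLpNorm_sub_of_eLpNorm_le [IsFiniteMeasure μ] {f : ℕ → α → β}
    {g : α → β} {p q : ℝ≥0∞} (hp : 1 ≤ p) (hpq : p < q) (hf : ∀ n, AEStronglyMeasurable (f n) μ)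
    {M : ℝ≥0∞} (hM : M ≠ ∞) (hbound : ∀ n, eLpNorm (f n) q μ ≤ M)
    (hlim : ∀ᵐ x ∂μ, Tendsto (fun n => f n x) atTop (𝓝 (g x))) :
    MemLp g p μ ∧ Tendsto (fun n => eLpNorm (f n - g) p μ) atTop (𝓝 0) := by
  have hui := uniformIntegrable_of_eLpNorm_le (one_pos.trans_le hp).ne' hpq hf hM hbound
  have hg := hui.memLp_of_ae_tendsto hlim
  exact ⟨hg, tendsto_Lp_finite_of_tendsto_ae hp hpq.ne_top hf hg hui.unifIntegrable hlim⟩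

theorem tendsto_integral_map_of_tendsto_ae [IsFiniteMeasure μ] {Y : Type*} [TopologicalSpace Y]
    [MeasurableSpace Y] [OpensMeasurableSpace Y] {T : ℕ → α → Y} {T' : α → Y}
    (hT : ∀ n, AEMeasurable (T n) μ) (hT' : AEMeasurable T' μ)
    (hlim : ∀ᵐ x ∂μ, Tendsto (fun n => T n x) atTop (𝓝 (T' x))) (φ : Y →ᵇ ℝ) :
    Tendsto (fun n => ∫ y, φ y ∂μ.map (T n)) atTop (𝓝 (∫ y, φ y ∂μ.map T')) := by
  simp only [integral_map (hT _) φ.continuous.aestronglyMeasurable,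
    integral_map hT' φ.continuous.aestronglyMeasurable]
  refine tendsto_integral_of_dominated_convergence (fun _ => ‖φ‖)
    (fun n => φ.continuous.aestronglyMeasurable.comp_aemeasurable (hT n)) (integrable_const _)
    (fun n => ae_of_all _ fun x => φ.norm_coe_le_norm _) ?_
  filter_upwards [hlim] with x hx using (φ.continuous.tendsto _).comp hx

theorem integral_withDensity_ofReal {g : α → ℝ} (hg : AEMeasurable g μ) (φ : α → ℝ) :
    ∫ x, φ x ∂μ.withDensity (fun x => ENNReal.ofReal (g x)) = ∫ x, max (g x) 0 * φ x ∂μ :=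
  integral_withDensity_eq_integral_toReal_smul₀ hg.ennreal_ofReal
    (ae_of_all _ fun _ => ENNReal.ofReal_lt_top) φ

theorem tendsto_integral_withDensity_ofReal {g : ℕ → α → ℝ} {g' : α → ℝ}
    (hg : ∀ n, Integrable (g n) μ) (hg' : AEStronglyMeasurable g' μ)
    (hlim : Tendsto (fun n => eLpNorm (g n - g') 1 μ) atTop (𝓝 0))
    {φ : α → ℝ} (hφ : AEStronglyMeasurable φ μ) {C : ℝ} (hC : ∀ᵐ x ∂μ, ‖φ x‖ ≤ C) :
    Tendsto (fun n => ∫ x, φ x ∂μ.withDensity (fun x => ENNReal.ofReal (g n x))) atTop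
      (𝓝 (∫ x, φ x ∂μ.withDensity (fun x => ENNReal.ofReal (g' x)))) := by
  simp only [integral_withDensity_ofReal (hg _).aemeasurable,
    integral_withDensity_ofReal hg'.aemeasurable]
  refine tendsto_integral_of_L1' _
    ((hg'.aemeasurable.max aemeasurable_const).aestronglyMeasurable.mul hφ)
    (Eventually.of_forall fun n => (hg n).pos_part.mul_bdd hφ hC) ?_
  have hle : ∀ n, eLpNorm ((fun x => max (g n x) 0 * φ x) - fun x => max (g' x) 0 * φ x) 1 μ
      ≤ ENNReal.ofReal C * eLpNorm (g n - g') 1 μ := fun n => by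
    refine eLpNorm_le_mul_eLpNorm_of_ae_le_mul ?_ 1
    filter_upwards [hC] with x hx
    simp only [Pi.sub_apply, ← sub_mul, norm_mul, Real.norm_eq_abs]
    rw [mul_comm]
    exact mul_le_mul hx (abs_max_sub_max_le_abs _ _ _) (abs_nonneg _) ((abs_nonneg _).trans hx)
  have hbound :=
    ENNReal.Tendsto.const_mul (a := ENNReal.ofReal C) hlim (Or.inr ENNReal.ofReal_ne_top)
  rw [mul_zero] at hbound
  exact tendsto_of_tendsto_of_tendsto_of_le_of_le tendsto_const_nhds hbound (fun _ => zero_le) hle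

end MeasureTheory

theorem pushforward_density_limit_general {X : Type*} [MeasurableSpace X]
    [TopologicalSpace X] [PolishSpace X] [BorelSpace X]
    (μ : Measure X) [IsProbabilityMeasure μ]
    (T : ℕ → X → X) (Tlim : X → X)
    (hT : ∀ N, Measurable (T N))
    (hTconv : ∀ᵐ x ∂μ, Tendsto (fun N => T N x) atTop (nhds (Tlim x)))
    (p : ℝ) (hp : 1 < p)
    (f : ℕ → X → ℝ) (flim : X → ℝ)
    (hfm : ∀ N, Measurable (f N))
    (hdens : ∀ N, Measure.map (T N) μ = μ.withDensity (fun x => ENNReal.ofReal (f N x)))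
    (M : ℝ≥0∞) (hM : M ≠ ⊤)
    (hbound : ∀ N, eLpNorm (f N) (ENNReal.ofReal p) μ ≤ M)
    (hconv : ∀ᵐ x ∂μ, Tendsto (fun N => f N x) atTop (nhds (flim x))) :
    Measure.map Tlim μ = μ.withDensity (fun x => ENNReal.ofReal (flim x)) ∧
    ((∀ᵐ x ∂μ, 0 < flim x) →
      (Measure.map Tlim μ ≪ μ ∧ μ ≪ Measure.map Tlim μ)) := by
  have hq : 1 < ENNReal.ofReal p := ENNReal.one_lt_ofReal.2 hp
  have hf_int (N : ℕ) : Integrable (f N) μ :=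
    MemLp.integrable hq.le ⟨(hfm N).aestronglyMeasurable, (hbound N).trans_lt hM.lt_top⟩
  obtain ⟨hflim, hL1⟩ := memLp_and_tendsto_eLpNorm_sub_of_eLpNorm_le le_rfl hq
    (fun N => (hfm N).aestronglyMeasurable) hM hbound hconv
  have hflim_int : Integrable flim μ := memLp_one_iff_integrable.1 hflim
  have hTlim : AEMeasurable Tlim μ :=
    aemeasurable_of_tendsto_metrizable_ae' (fun N => (hT N).aemeasurable) hTconv
  have hmap : μ.map Tlim = μ.withDensity (fun x => ENNReal.ofReal (flim x)) := by
    have := isFiniteMeasure_withDensity_ofReal hflim_int.hasFiniteIntegral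
    refine ext_of_forall_integral_eq_of_IsFiniteMeasure fun φ => tendsto_nhds_unique
      (tendsto_integral_map_of_tendsto_ae (fun N => (hT N).aemeasurable) hTlim hTconv φ) ?_
    simp only [hdens]
    exact tendsto_integral_withDensity_ofReal hf_int hflim_int.aestronglyMeasurable hL1
      φ.continuous.aestronglyMeasurable (ae_of_all _ φ.norm_coe_le_norm)
  refine ⟨hmap, fun hpos => hmap ▸ ⟨withDensity_absolutelyContinuous _ _,
    withDensity_absolutelyContinuous' hflim_int.aemeasurable.ennreal_ofReal ?_⟩⟩
  filter_upwards [hpos] with x hx using (ENNReal.ofReal_pos.2 hx).ne'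

/-- Abstract quasi-invariance limit argument: if `(T_N)_* μ = f_N · μ` with `f_N`
uniformly bounded in `L^p(μ)`, `p > 1`, `f_N → f` a.e. and `T_N → T` a.e., then
`T_* μ = f · μ`; in particular if `f > 0` a.e. then `T_* μ` and `μ` are mutually
absolutely continuous. -/
theorem pushforward_density_limit {X : Type*} [MeasurableSpace X]
    [TopologicalSpace X] [PolishSpace X] [BorelSpace X]
    (μ : Measure X) [IsProbabilityMeasure μ]
    (T : ℕ → X → X) (Tlim : X → X)
    (hT : ∀ N, Measurable (T N)) (hTl : Measurable Tlim)
    (hTconv : ∀ᵐ x ∂μ, Tendsto (fun N => T N x) atTop (nhds (Tlim x)))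
    (p : ℝ) (hp : 1 < p)
    (f : ℕ → X → ℝ) (flim : X → ℝ)
    (hfm : ∀ N, Measurable (f N)) (hflm : Measurable flim)
    (hfnn : ∀ N x, 0 ≤ f N x)
    (hdens : ∀ N, Measure.map (T N) μ = μ.withDensity (fun x => ENNReal.ofReal (f N x)))
    (M : ℝ≥0∞) (hM : M ≠ ⊤)
    (hbound : ∀ N, eLpNorm (f N) (ENNReal.ofReal p) μ ≤ M)
    (hconv : ∀ᵐ x ∂μ, Tendsto (fun N => f N x) atTop (nhds (flim x))) :
    Measure.map Tlim μ = μ.withDensity (fun x => ENNReal.ofReal (flim x)) ∧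
    ((∀ᵐ x ∂μ, 0 < flim x) →
      (Measure.map Tlim μ ≪ μ ∧ μ ≪ Measure.map Tlim μ)) :=
  pushforward_density_limit_general μ T Tlim hT hTconv p hp f flim hfm hdens M hM hbound hconv
end
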